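/- arXiv:2512.17084 — 3 statements merged into one kernel-verified Lean document; each statement's English description precedes it below -/
import Mathlib

section
/- Let W, W' : [0,1]² → ℝ be integrable measurable functions and let δ ≥ 0 be such that for all measurable sets S, T ⊆ [0,1] one has |∫_{S×T} (W(u,v) − W'(u,v)) du dv| ≤ δ. Let f ≥ 1 and let X : [0,1] → ℝ^f be measurable with ‖X(u)‖ ≤ M for all u ∈ [0,1]. Then |Φ(W,X) − Φ(W',X)| ≤ 16 f M² δ, where Φ(W,X) := ∫₀¹∫₀¹ W(u,v) ‖X(u) − X(v)‖² du dv. -/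
/-!
Write `D = W - W'`. Since `‖X u - X v‖² = ∑ᵢ (Xᵢ(u)² + Xᵢ(v)² - 2 Xᵢ(u) Xᵢ(v))`, it suffices to
bound the bilinear test integrals `∫∫ D(u,v) φ(u) ψ(v)` with `|φ| ≤ c`, `|ψ| ≤ d` by `4 c d δ`; each
coordinate then contributes `(4 + 4 + 8) M² δ`. For the bilinear bound, integrate out `v`: every set
integral of `G(u) = ∫ ψ(v) D(u,v) dv` is at most `2 d δ`, and whenever all set integrals of `F` are
at most `η`, splitting `h` into its positive and negative parts and the domain by the sign of `F`
gives `|∫ h F| ≤ 2 c η`.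
-/

open MeasureTheory

/-- The graphon Dirichlet-energy functional
`Φ(W,X) = ∫₀¹∫₀¹ W(u,v) ‖X(u) − X(v)‖² du dv`. -/
noncomputable def graphonEnergy (f : ℕ) (W : ℝ → ℝ → ℝ)
    (X : ℝ → EuclideanSpace ℝ (Fin f)) : ℝ :=
  ∫ u in Set.Icc (0:ℝ) 1, ∫ v in Set.Icc (0:ℝ) 1, W u v * ‖X u - X v‖ ^ 2

open Set Function

section

variable {α β : Type*} [MeasurableSpace α] [MeasurableSpace β] {μ : Measure α} {ν : Measure β}

def CutNormLE (μ : Measure α) (ν : Measure β) (D : α → β → ℝ) (δ : ℝ) : Prop :=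
  ∀ S T, MeasurableSet S → MeasurableSet T → |∫ u in S, ∫ v in T, D u v ∂ν ∂μ| ≤ δ

theorem integral_mul_le_of_setIntegral_le {F h : α → ℝ} {c η : ℝ}
    (hF : Integrable F μ) (hFm : Measurable F) (hhm : AEStronglyMeasurable h μ)
    (hFS : ∀ S, MeasurableSet S → ∫ x in S, F x ∂μ ≤ η)
    (hc : 0 ≤ c) (h0 : ∀ᵐ x ∂μ, 0 ≤ h x) (hhc : ∀ᵐ x ∂μ, h x ≤ c) :
    ∫ x, h x * F x ∂μ ≤ c * η := by
  set P := {x | 0 ≤ F x}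
  have hP : MeasurableSet P := measurableSet_le measurable_const hFm
  have hhF : Integrable (fun x => h x * F x) μ := by
    refine hF.bdd_mul (c := c) hhm ?_
    filter_upwards [h0, hhc] with x h0x hcx
    rwa [Real.norm_eq_abs, abs_of_nonneg h0x]
  have hpos : ∫ x in P, h x * F x ∂μ ≤ c * η :=
    calc ∫ x in P, h x * F x ∂μ ≤ ∫ x in P, c * F x ∂μ := by
          refine setIntegral_mono_ae_restrict hhF.integrableOn (hF.integrableOn.const_mul c) ?_
          filter_upwards [ae_restrict_mem hP, ae_restrict_of_ae hhc] with x hxP hcx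
          exact mul_le_mul_of_nonneg_right hcx hxP
      _ = c * ∫ x in P, F x ∂μ := integral_const_mul c _
      _ ≤ c * η := mul_le_mul_of_nonneg_left (hFS P hP) hc
  have hneg : ∫ x in Pᶜ, h x * F x ∂μ ≤ 0 := by
    refine integral_nonpos_of_ae ?_
    filter_upwards [ae_restrict_mem hP.compl, ae_restrict_of_ae h0] with x hxP h0x
    exact mul_nonpos_of_nonneg_of_nonpos h0x (le_of_lt (not_le.mp hxP))
  rw [← integral_add_compl hP hhF]
  linarith

theorem abs_integral_mul_le_of_abs_setIntegral_le_of_nonneg {F h : α → ℝ} {c η : ℝ}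
    (hF : Integrable F μ) (hFm : Measurable F) (hhm : AEStronglyMeasurable h μ)
    (hFS : ∀ S, MeasurableSet S → |∫ x in S, F x ∂μ| ≤ η)
    (hc : 0 ≤ c) (h0 : ∀ᵐ x ∂μ, 0 ≤ h x) (hhc : ∀ᵐ x ∂μ, h x ≤ c) :
    |∫ x, h x * F x ∂μ| ≤ c * η := by
  have hle := integral_mul_le_of_setIntegral_le hF hFm hhm
    (fun S hS => (le_abs_self _).trans (hFS S hS)) hc h0 hhc
  have hge := integral_mul_le_of_setIntegral_le (F := fun x => -F x) hF.neg hFm.neg hhm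
    (fun S hS => by rw [integral_neg]; exact (neg_le_abs _).trans (hFS S hS)) hc h0 hhc
  simp only [mul_neg, integral_neg] at hge
  exact abs_le.mpr ⟨by linarith, hle⟩

theorem abs_integral_mul_le_of_abs_setIntegral_le {F h : α → ℝ} {c η : ℝ}
    (hF : Integrable F μ) (hFm : Measurable F) (hhm : AEStronglyMeasurable h μ)
    (hFS : ∀ S, MeasurableSet S → |∫ x in S, F x ∂μ| ≤ η)
    (hc : 0 ≤ c) (hhc : ∀ᵐ x ∂μ, |h x| ≤ c) :
    |∫ x, h x * F x ∂μ| ≤ 2 * c * η := by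
  have hpos_m : AEStronglyMeasurable (fun x => (h x)⁺) μ := hhm.sup aestronglyMeasurable_const
  have hneg_m : AEStronglyMeasurable (fun x => (h x)⁻) μ :=
    hhm.neg.sup aestronglyMeasurable_const
  have hpos_c : ∀ᵐ x ∂μ, (h x)⁺ ≤ c := by
    filter_upwards [hhc] with x hx using (sup_le (le_abs_self _) (abs_nonneg _)).trans hx
  have hneg_c : ∀ᵐ x ∂μ, (h x)⁻ ≤ c := by
    filter_upwards [hhc] with x hx using (sup_le (neg_le_abs _) (abs_nonneg _)).trans hx
  have hsplit : ∫ x, h x * F x ∂μ = ∫ x, (h x)⁺ * F x ∂μ - ∫ x, (h x)⁻ * F x ∂μ := by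
    rw [← integral_sub]
    · simp_rw [← sub_mul, posPart_sub_negPart]
    · refine hF.bdd_mul (c := c) hpos_m (hpos_c.mono fun x hx => ?_)
      rwa [Real.norm_eq_abs, abs_of_nonneg (posPart_nonneg _)]
    · refine hF.bdd_mul (c := c) hneg_m (hneg_c.mono fun x hx => ?_)
      rwa [Real.norm_eq_abs, abs_of_nonneg (negPart_nonneg _)]
  rw [hsplit]
  calc _ ≤ _ := abs_sub _ _
    _ ≤ c * η + c * η := add_le_add
        (abs_integral_mul_le_of_abs_setIntegral_le_of_nonneg hF hFm hpos_m hFS hc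
          (ae_of_all _ fun _ => posPart_nonneg _) hpos_c)
        (abs_integral_mul_le_of_abs_setIntegral_le_of_nonneg hF hFm hneg_m hFS hc
          (ae_of_all _ fun _ => negPart_nonneg _) hneg_c)
    _ = 2 * c * η := by ring

theorem integrable_prod_mul_mul {D : α → β → ℝ} {φ : α → ℝ} {ψ : β → ℝ} {c d : ℝ}
    (hD : Integrable (uncurry D) (μ.prod ν))
    (hφm : AEStronglyMeasurable φ μ) (hψm : AEStronglyMeasurable ψ ν)
    (hφ : ∀ᵐ u ∂μ, |φ u| ≤ c) (hψ : ∀ᵐ v ∂ν, |ψ v| ≤ d) :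
    Integrable (fun p : α × β => D p.1 p.2 * (φ p.1 * ψ p.2)) (μ.prod ν) := by
  refine hD.mul_bdd (c := c * d) (hφm.comp_fst.mul hψm.comp_snd) ?_
  filter_upwards [Measure.quasiMeasurePreserving_fst.ae hφ,
    Measure.quasiMeasurePreserving_snd.ae hψ] with p hφp hψp
  rw [Real.norm_eq_abs, abs_mul]
  exact mul_le_mul hφp hψp (abs_nonneg _) ((abs_nonneg _).trans hφp)

theorem integrable_prod_mul_snd {D : α → β → ℝ} {ψ : β → ℝ} {d : ℝ}
    (hD : Integrable (uncurry D) (μ.prod ν))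
    (hψm : AEStronglyMeasurable ψ ν) (hψ : ∀ᵐ v ∂ν, |ψ v| ≤ d) :
    Integrable (fun p : α × β => ψ p.2 * D p.1 p.2) (μ.prod ν) :=
  hD.bdd_mul (c := d) hψm.comp_snd (Measure.quasiMeasurePreserving_snd.ae hψ)

theorem integrable_prod_mul_norm_sub_sq {E : Type*} [NormedAddCommGroup E] {K : α → α → ℝ}
    {X : α → E} {M : ℝ} (hK : Integrable (uncurry K) (μ.prod μ))
    (hXm : AEStronglyMeasurable X μ) (hX : ∀ᵐ u ∂μ, ‖X u‖ ≤ M) :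
    Integrable (fun p : α × α => K p.1 p.2 * ‖X p.1 - X p.2‖ ^ 2) (μ.prod μ) := by
  refine hK.mul_bdd (c := (2 * M) ^ 2) ((hXm.comp_fst.sub hXm.comp_snd).norm.pow 2) ?_
  filter_upwards [Measure.quasiMeasurePreserving_fst.ae hX,
    Measure.quasiMeasurePreserving_snd.ae hX] with p h1 h2
  rw [norm_pow, norm_norm]
  exact pow_le_pow_left₀ (norm_nonneg _) ((norm_sub_le _ _).trans (by linarith)) 2

variable [SFinite μ] [SFinite ν]

theorem abs_setIntegral_integral_mul_le {D : α → β → ℝ} {ψ : β → ℝ} {d δ : ℝ}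
    (hDm : Measurable (uncurry D)) (hD : Integrable (uncurry D) (μ.prod ν))
    (hcut : CutNormLE μ ν D δ)
    (hψm : AEStronglyMeasurable ψ ν) (hd : 0 ≤ d) (hψ : ∀ᵐ v ∂ν, |ψ v| ≤ d)
    {S : Set α} (hS : MeasurableSet S) :
    |∫ u in S, ∫ v, ψ v * D u v ∂ν ∂μ| ≤ 2 * d * δ := by
  have hDS : Integrable (uncurry D) ((μ.restrict S).prod ν) :=
    hD.mono_measure (Measure.prod_mono Measure.restrict_le_self le_rfl)
  have hDST : ∀ T, Integrable (uncurry D) ((μ.restrict S).prod (ν.restrict T)) := fun _ =>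
    hDS.mono_measure (Measure.prod_mono le_rfl Measure.restrict_le_self)
  set F : β → ℝ := fun v => ∫ u in S, D u v ∂μ
  have hF : Integrable F ν := hDS.integral_prod_right
  have hFm : Measurable F := hDm.stronglyMeasurable.integral_prod_left'.measurable
  have hFS : ∀ T, MeasurableSet T → |∫ v in T, F v ∂ν| ≤ δ := fun T hT => by
    rw [← integral_integral_swap (hDST T)]
    exact hcut S T hS hT
  rw [integral_integral_swap (integrable_prod_mul_snd hDS hψm hψ)]
  simp_rw [integral_const_mul]
  exact abs_integral_mul_le_of_abs_setIntegral_le hF hFm hψm hFS hd hψ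

theorem abs_integral_prod_mul_mul_le {D : α → β → ℝ} {φ : α → ℝ} {ψ : β → ℝ} {c d δ : ℝ}
    (hDm : Measurable (uncurry D)) (hD : Integrable (uncurry D) (μ.prod ν))
    (hcut : CutNormLE μ ν D δ)
    (hφm : AEStronglyMeasurable φ μ) (hψm : Measurable ψ) (hc : 0 ≤ c) (hd : 0 ≤ d)
    (hφ : ∀ᵐ u ∂μ, |φ u| ≤ c) (hψ : ∀ᵐ v ∂ν, |ψ v| ≤ d) :
    |∫ p, D p.1 p.2 * (φ p.1 * ψ p.2) ∂μ.prod ν| ≤ 4 * (c * d) * δ := by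
  set G : α → ℝ := fun u => ∫ v, ψ v * D u v ∂ν
  have hG : Integrable G μ :=
    (integrable_prod_mul_snd hD hψm.aestronglyMeasurable hψ).integral_prod_left
  have hGm : Measurable G :=
    ((hψm.comp measurable_snd).mul hDm).stronglyMeasurable.integral_prod_right'.measurable
  have hGS : ∀ S, MeasurableSet S → |∫ u in S, G u ∂μ| ≤ 2 * d * δ := fun S hS =>
    abs_setIntegral_integral_mul_le hDm hD hcut hψm.aestronglyMeasurable hd hψ hS
  have hsplit : ∫ p, D p.1 p.2 * (φ p.1 * ψ p.2) ∂μ.prod ν = ∫ u, φ u * G u ∂μ := by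
    rw [integral_prod _ (integrable_prod_mul_mul hD hφm hψm.aestronglyMeasurable hφ hψ)]
    refine integral_congr_ae (ae_of_all _ fun u => ?_)
    simp only [G, ← integral_const_mul]
    congr 1; ext v; ring
  rw [hsplit]
  calc _ ≤ 2 * c * (2 * d * δ) :=
        abs_integral_mul_le_of_abs_setIntegral_le hG hGm hφm hGS hc hφ
    _ = 4 * (c * d) * δ := by ring

theorem abs_integral_prod_mul_sub_sq_le {D : α → α → ℝ} {x : α → ℝ} {m δ : ℝ}
    (hDm : Measurable (uncurry D)) (hD : Integrable (uncurry D) (μ.prod μ))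
    (hcut : CutNormLE μ μ D δ)
    (hxm : Measurable x) (hx : ∀ᵐ u ∂μ, |x u| ≤ m) :
    |∫ p, D p.1 p.2 * (x p.1 - x p.2) ^ 2 ∂μ.prod μ| ≤ 16 * m ^ 2 * δ := by
  have hx2 : ∀ᵐ u ∂μ, |x u ^ 2| ≤ m ^ 2 := hx.mono fun u hu => by
    rw [abs_pow]; exact pow_le_pow_left₀ (abs_nonneg _) hu 2
  have hx' : ∀ᵐ u ∂μ, |x u| ≤ |m| := hx.mono fun u hu => hu.trans (le_abs_self m)
  have h1 : ∀ᵐ u ∂μ, |(1 : ℝ)| ≤ 1 := ae_of_all _ fun _ => by simp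
  have hx2m : Measurable fun u => x u ^ 2 := hxm.pow_const 2
  have hA := integrable_prod_mul_mul hD hx2m.aestronglyMeasurable aestronglyMeasurable_const
    hx2 h1
  have hB := integrable_prod_mul_mul hD aestronglyMeasurable_const hx2m.aestronglyMeasurable
    h1 hx2
  have hC := integrable_prod_mul_mul hD hxm.aestronglyMeasurable hxm.aestronglyMeasurable hx' hx'
  have hexp : ∫ p, D p.1 p.2 * (x p.1 - x p.2) ^ 2 ∂μ.prod μ
      = ∫ p, D p.1 p.2 * (x p.1 ^ 2 * 1) ∂μ.prod μ + ∫ p, D p.1 p.2 * (1 * x p.2 ^ 2) ∂μ.prod μ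
        - 2 * ∫ p, D p.1 p.2 * (x p.1 * x p.2) ∂μ.prod μ := by
    have hAB : Integrable (fun p : α × α =>
        D p.1 p.2 * (x p.1 ^ 2 * 1) + D p.1 p.2 * (1 * x p.2 ^ 2)) (μ.prod μ) := hA.add hB
    rw [← integral_const_mul, ← integral_add hA hB, ← integral_sub hAB (hC.const_mul 2)]
    congr 1; ext p; ring
  have bA := abs_integral_prod_mul_mul_le hDm hD hcut hx2m.aestronglyMeasurable
    measurable_const (sq_nonneg m) zero_le_one hx2 h1
  have bB := abs_integral_prod_mul_mul_le hDm hD hcut aestronglyMeasurable_const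
    hx2m zero_le_one (sq_nonneg m) h1 hx2
  have bC := abs_integral_prod_mul_mul_le hDm hD hcut hxm.aestronglyMeasurable hxm
    (abs_nonneg m) (abs_nonneg m) hx' hx'
  rw [hexp]
  calc _ ≤ |∫ p, D p.1 p.2 * (x p.1 ^ 2 * 1) ∂μ.prod μ|
          + |∫ p, D p.1 p.2 * (1 * x p.2 ^ 2) ∂μ.prod μ|
          + 2 * |∫ p, D p.1 p.2 * (x p.1 * x p.2) ∂μ.prod μ| := by
        refine (abs_sub _ _).trans (add_le_add (abs_add_le _ _) ?_)
        rw [abs_mul, abs_two]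
    _ ≤ 4 * (m ^ 2 * 1) * δ + 4 * (1 * m ^ 2) * δ + 2 * (4 * (|m| * |m|) * δ) := by gcongr
    _ = 16 * m ^ 2 * δ := by rw [abs_mul_abs_self]; ring

theorem abs_integral_prod_mul_norm_sub_sq_le {ι : Type*} [Fintype ι] {D : α → α → ℝ}
    {X : α → EuclideanSpace ℝ ι} {M δ : ℝ}
    (hDm : Measurable (uncurry D)) (hD : Integrable (uncurry D) (μ.prod μ))
    (hcut : CutNormLE μ μ D δ)
    (hXm : Measurable X) (hX : ∀ᵐ u ∂μ, ‖X u‖ ≤ M) :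
    |∫ p, D p.1 p.2 * ‖X p.1 - X p.2‖ ^ 2 ∂μ.prod μ| ≤ 16 * Fintype.card ι * M ^ 2 * δ := by
  have hXim : ∀ i, Measurable fun u => X u i := fun i =>
    (EuclideanSpace.proj i).continuous.measurable.comp hXm
  have hXi : ∀ i, ∀ᵐ u ∂μ, |X u i| ≤ M := fun i =>
    hX.mono fun u hu => (PiLp.norm_apply_le (X u) i).trans hu
  have hint : ∀ i,
      Integrable (fun p : α × α => D p.1 p.2 * (X p.1 i - X p.2 i) ^ 2) (μ.prod μ) := fun i => by
    simpa only [Real.norm_eq_abs, sq_abs] using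
      integrable_prod_mul_norm_sub_sq hD (hXim i).aestronglyMeasurable (hXi i)
  have hsum : ∫ p, D p.1 p.2 * ‖X p.1 - X p.2‖ ^ 2 ∂μ.prod μ
      = ∑ i, ∫ p, D p.1 p.2 * (X p.1 i - X p.2 i) ^ 2 ∂μ.prod μ := by
    rw [← integral_finsetSum _ fun i _ => hint i]
    congr 1; ext p
    rw [EuclideanSpace.real_norm_sq_eq, Finset.mul_sum]
    rfl
  rw [hsum]
  calc _ ≤ ∑ i, |∫ p, D p.1 p.2 * (X p.1 i - X p.2 i) ^ 2 ∂μ.prod μ| :=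
        Finset.abs_sum_le_sum_abs _ _
    _ ≤ ∑ _i : ι, 16 * M ^ 2 * δ := Finset.sum_le_sum fun i _ =>
        abs_integral_prod_mul_sub_sq_le hDm hD hcut (hXim i) (hXi i)
    _ = 16 * Fintype.card ι * M ^ 2 * δ := by
        rw [Finset.sum_const, Finset.card_univ, nsmul_eq_mul]; ring

end

theorem graphonEnergy_kernel_cut_lipschitz_general
    (f : ℕ) (W W' : ℝ → ℝ → ℝ) (δ M : ℝ)
    (hWmeas : Measurable fun p : ℝ × ℝ => W p.1 p.2)
    (hW'meas : Measurable fun p : ℝ × ℝ => W' p.1 p.2)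
    (hWint : Integrable (fun p : ℝ × ℝ => W p.1 p.2)
      (volume.restrict (Set.Icc (0:ℝ) 1 ×ˢ Set.Icc (0:ℝ) 1)))
    (hW'int : Integrable (fun p : ℝ × ℝ => W' p.1 p.2)
      (volume.restrict (Set.Icc (0:ℝ) 1 ×ˢ Set.Icc (0:ℝ) 1)))
    (hcut : ∀ S T : Set ℝ, MeasurableSet S → MeasurableSet T →
      S ⊆ Set.Icc (0:ℝ) 1 → T ⊆ Set.Icc (0:ℝ) 1 →
      |∫ u in S, ∫ v in T, (W u v - W' u v)| ≤ δ)
    (X : ℝ → EuclideanSpace ℝ (Fin f)) (hXmeas : Measurable X)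
    (hXbd : ∀ u ∈ Set.Icc (0:ℝ) 1, ‖X u‖ ≤ M) :
    |graphonEnergy f W X - graphonEnergy f W' X| ≤ 16 * f * M ^ 2 * δ := by
  set μ := volume.restrict (Icc (0:ℝ) 1)
  have hI : MeasurableSet (Icc (0:ℝ) 1) := measurableSet_Icc
  have hμμ : μ.prod μ = volume.restrict (Icc (0:ℝ) 1 ×ˢ Icc (0:ℝ) 1) := by
    rw [Measure.prod_restrict, ← Measure.volume_eq_prod]
  rw [← hμμ] at hWint hW'int
  have hX : ∀ᵐ u ∂μ, ‖X u‖ ≤ M := ae_restrict_of_forall_mem hI hXbd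
  have hcutμ : CutNormLE μ μ (fun u v => W u v - W' u v) δ := fun S T hS hT => by
    rw [Measure.restrict_restrict hS, Measure.restrict_restrict hT]
    exact hcut _ _ (hS.inter hI) (hT.inter hI) inter_subset_right inter_subset_right
  have henergy : ∀ K : ℝ → ℝ → ℝ, Integrable (uncurry K) (μ.prod μ) →
      graphonEnergy f K X = ∫ p, K p.1 p.2 * ‖X p.1 - X p.2‖ ^ 2 ∂μ.prod μ := fun K hK =>
    integral_integral (integrable_prod_mul_norm_sub_sq hK hXmeas.aestronglyMeasurable hX)
  rw [henergy W hWint, henergy W' hW'int, ← integral_sub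
    (integrable_prod_mul_norm_sub_sq hWint hXmeas.aestronglyMeasurable hX)
    (integrable_prod_mul_norm_sub_sq hW'int hXmeas.aestronglyMeasurable hX)]
  simp_rw [← sub_mul]
  simpa only [Fintype.card_fin] using
    abs_integral_prod_mul_norm_sub_sq_le (hWmeas.sub hW'meas) (hWint.sub hW'int) hcutμ hXmeas hX

/-- Lipschitz continuity of the Dirichlet-energy graphon functional in the kernel
argument with respect to the cut norm: if `‖W − W'‖_□ ≤ δ` and `‖X(u)‖ ≤ M`, then
`|Φ(W,X) − Φ(W',X)| ≤ 16 f M² δ`. -/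
theorem graphonEnergy_kernel_cut_lipschitz
    (f : ℕ) (hf : 1 ≤ f) (W W' : ℝ → ℝ → ℝ) (δ M : ℝ) (hδ : 0 ≤ δ)
    (hWmeas : Measurable fun p : ℝ × ℝ => W p.1 p.2)
    (hW'meas : Measurable fun p : ℝ × ℝ => W' p.1 p.2)
    (hWint : Integrable (fun p : ℝ × ℝ => W p.1 p.2)
      (volume.restrict (Set.Icc (0:ℝ) 1 ×ˢ Set.Icc (0:ℝ) 1)))
    (hW'int : Integrable (fun p : ℝ × ℝ => W' p.1 p.2)
      (volume.restrict (Set.Icc (0:ℝ) 1 ×ˢ Set.Icc (0:ℝ) 1)))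
    (hcut : ∀ S T : Set ℝ, MeasurableSet S → MeasurableSet T →
      S ⊆ Set.Icc (0:ℝ) 1 → T ⊆ Set.Icc (0:ℝ) 1 →
      |∫ u in S, ∫ v in T, (W u v - W' u v)| ≤ δ)
    (X : ℝ → EuclideanSpace ℝ (Fin f)) (hXmeas : Measurable X)
    (hXbd : ∀ u ∈ Set.Icc (0:ℝ) 1, ‖X u‖ ≤ M) :
    |graphonEnergy f W X - graphonEnergy f W' X| ≤ 16 * f * M ^ 2 * δ :=
  graphonEnergy_kernel_cut_lipschitz_general f W W' δ M hWmeas hW'meas hWint hW'int hcut X hXmeas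
    hXbd
end

section
/- Let W : [0,1]² → ℝ be measurable with |W(u,v)| ≤ C for all u, v, and let X, X' : [0,1] → ℝ^f be measurable with ‖X(u)‖ ≤ M and ‖X'(u)‖ ≤ M for all u ∈ [0,1]. Then |Φ(W,X) − Φ(W,X')| ≤ 8 C M ‖X − X'‖_{L²([0,1])}, where Φ(W,X) := ∫₀¹∫₀¹ W(u,v) ‖X(u) − X(v)‖² du dv and ‖X − X'‖_{L²([0,1])} := (∫₀¹ ‖X(u) − X'(u)‖² du)^{1/2}. -/
/-!
Write `a = X u - X v`, `b = X' u - X' v` and `g = ‖X - X'‖`. Since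
`‖a‖² - ‖b‖² = (‖a‖ + ‖b‖)(‖a‖ - ‖b‖)`, with `‖a‖ + ‖b‖ ≤ 4M` and
`|‖a‖ - ‖b‖| ≤ ‖a - b‖ ≤ g u + g v`, the two integrands differ by at most
`4CM (g u + g v)`. Integrating over the probability space `[0,1]²` gives `8CM ∫ g`,
and `∫ g ≤ (∫ g²)^{1/2}` by Cauchy–Schwarz.
-/

open MeasureTheory

theorem abs_sq_norm_sub_sq_norm_le {E : Type*} [SeminormedAddCommGroup E] (a b : E) :
    |‖a‖ ^ 2 - ‖b‖ ^ 2| ≤ (‖a‖ + ‖b‖) * ‖a - b‖ := by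
  rw [sq_sub_sq, abs_mul, abs_of_nonneg (by positivity)]
  exact mul_le_mul_of_nonneg_left (abs_norm_sub_norm_le a b) (by positivity)

theorem abs_mul_sq_norm_sub_sub_mul_sq_norm_sub_le {E : Type*} [SeminormedAddCommGroup E]
    {w C M : ℝ} {a b a' b' : E} (hw : |w| ≤ C) (ha : ‖a‖ ≤ M) (hb : ‖b‖ ≤ M)
    (ha' : ‖a'‖ ≤ M) (hb' : ‖b'‖ ≤ M) :
    |w * ‖a - b‖ ^ 2 - w * ‖a' - b'‖ ^ 2| ≤ 4 * C * M * (‖a - a'‖ + ‖b - b'‖) := by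
  have hC : 0 ≤ C := (abs_nonneg w).trans hw
  have hM : 0 ≤ M := (norm_nonneg a).trans ha
  have hdiff : ‖a - b‖ + ‖a' - b'‖ ≤ 4 * M := by
    linarith [norm_sub_le a b, norm_sub_le a' b']
  have hsub : ‖(a - b) - (a' - b')‖ ≤ ‖a - a'‖ + ‖b - b'‖ := by
    rw [sub_sub_sub_comm]; exact norm_sub_le _ _
  rw [← mul_sub, abs_mul]
  calc |w| * |‖a - b‖ ^ 2 - ‖a' - b'‖ ^ 2|
      ≤ C * ((‖a - b‖ + ‖a' - b'‖) * ‖(a - b) - (a' - b')‖) := by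
        gcongr
        exact abs_sq_norm_sub_sq_norm_le _ _
    _ ≤ C * (4 * M * (‖a - a'‖ + ‖b - b'‖)) := by
        gcongr
    _ = 4 * C * M * (‖a - a'‖ + ‖b - b'‖) := by ring

section

variable {α : Type*} [MeasurableSpace α] {μ : Measure α}

theorem integral_le_sqrt_integral_sq [IsProbabilityMeasure μ] {g : α → ℝ} (hg : MemLp g 2 μ) :
    ∫ u, g u ∂μ ≤ √(∫ u, g u ^ 2 ∂μ) := by
  have hvar := ProbabilityTheory.variance_nonneg g μ
  rw [ProbabilityTheory.variance_eq_sub hg] at hvar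
  exact (le_abs_self _).trans (Real.abs_le_sqrt (by simpa using hvar))

theorem abs_integral_integral_le_two_mul_integral [IsProbabilityMeasure μ] {F : α → α → ℝ}
    {h : α → ℝ} (hh : Integrable h μ) (hF : ∀ᵐ u ∂μ, ∀ᵐ v ∂μ, |F u v| ≤ h u + h v) :
    |∫ u, ∫ v, F u v ∂μ ∂μ| ≤ 2 * ∫ u, h u ∂μ := by
  have hinner : ∀ᵐ u ∂μ, ‖∫ v, F u v ∂μ‖ ≤ h u + ∫ v, h v ∂μ := by
    filter_upwards [hF] with u hu
    calc ‖∫ v, F u v ∂μ‖ ≤ ∫ v, (h u + h v) ∂μ := norm_integral_le_of_norm_le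
          ((integrable_const _).add hh) hu
      _ = h u + ∫ v, h v ∂μ := by simp [integral_add (integrable_const _) hh]
  calc |∫ u, ∫ v, F u v ∂μ ∂μ| ≤ ∫ u, (h u + ∫ v, h v ∂μ) ∂μ :=
        norm_integral_le_of_norm_le (hh.add (integrable_const _)) hinner
    _ = 2 * ∫ u, h u ∂μ := by
        rw [integral_add hh (integrable_const _)]
        simp only [integral_const, probReal_univ, smul_eq_mul, one_mul]
        ring

variable {E : Type*} [NormedAddCommGroup E] {W : α → α → ℝ} {C M : ℝ}

noncomputable def dirichletEnergy (μ : Measure α) (W : α → α → ℝ) (X : α → E) : ℝ :=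
  ∫ u, ∫ v, W u v * ‖X u - X v‖ ^ 2 ∂μ ∂μ

theorem integrable_dirichletEnergy_integrand [IsFiniteMeasure μ] {X : α → E}
    (hW : AEStronglyMeasurable (Function.uncurry W) (μ.prod μ)) (hWC : ∀ u v, |W u v| ≤ C)
    (hX : AEStronglyMeasurable X μ) (hXM : ∀ᵐ u ∂μ, ‖X u‖ ≤ M) :
    Integrable (fun p : α × α => W p.1 p.2 * ‖X p.1 - X p.2‖ ^ 2) (μ.prod μ) := by
  refine .of_bound (hW.mul ((hX.comp_fst.sub hX.comp_snd).norm.pow 2)) (C * (2 * M) ^ 2) ?_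
  filter_upwards [Measure.quasiMeasurePreserving_fst.ae hXM,
    Measure.quasiMeasurePreserving_snd.ae hXM] with p hp₁ hp₂
  have hdiff : ‖X p.1 - X p.2‖ ≤ 2 * M := by linarith [norm_sub_le (X p.1) (X p.2)]
  have hC : 0 ≤ C := (abs_nonneg _).trans (hWC p.1 p.2)
  rw [norm_mul, norm_pow, norm_norm, Real.norm_eq_abs]
  gcongr
  exact hWC _ _

theorem abs_dirichletEnergy_sub_le [IsProbabilityMeasure μ] {X X' : α → E}
    (hW : AEStronglyMeasurable (Function.uncurry W) (μ.prod μ)) (hWC : ∀ u v, |W u v| ≤ C)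
    (hX : AEStronglyMeasurable X μ) (hX' : AEStronglyMeasurable X' μ)
    (hXM : ∀ᵐ u ∂μ, ‖X u‖ ≤ M) (hX'M : ∀ᵐ u ∂μ, ‖X' u‖ ≤ M) :
    |dirichletEnergy μ W X - dirichletEnergy μ W X'|
      ≤ 8 * C * M * √(∫ u, ‖X u - X' u‖ ^ 2 ∂μ) := by
  obtain ⟨u₀, hu₀⟩ := hXM.exists
  have hCM : 0 ≤ 8 * C * M := by
    have := (abs_nonneg _).trans (hWC u₀ u₀)
    have := (norm_nonneg _).trans hu₀
    positivity
  set g : α → ℝ := fun u => ‖X u - X' u‖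
  have hg : MemLp g 2 μ := by
    refine .of_bound (hX.sub hX').norm (2 * M) ?_
    filter_upwards [hXM, hX'M] with u hu hu'
    rw [norm_norm]
    linarith [norm_sub_le (X u) (X' u)]
  have hpointwise : ∀ᵐ u ∂μ, ∀ᵐ v ∂μ, |W u v * ‖X u - X v‖ ^ 2 - W u v * ‖X' u - X' v‖ ^ 2|
      ≤ 4 * C * M * g u + 4 * C * M * g v := by
    filter_upwards [hXM, hX'M] with u hu hu'
    filter_upwards [hXM, hX'M] with v hv hv'
    rw [← mul_add]
    exact abs_mul_sq_norm_sub_sub_mul_sq_norm_sub_le (hWC u v) hu hv hu' hv'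
  rw [dirichletEnergy, dirichletEnergy, ← integral_integral_sub
    (integrable_dirichletEnergy_integrand hW hWC hX hXM)
    (integrable_dirichletEnergy_integrand hW hWC hX' hX'M)]
  calc _ ≤ 2 * ∫ u, 4 * C * M * g u ∂μ := abs_integral_integral_le_two_mul_integral
        ((hg.integrable one_le_two).const_mul _) hpointwise
    _ = 8 * C * M * ∫ u, g u ∂μ := by rw [integral_const_mul]; ring
    _ ≤ 8 * C * M * √(∫ u, g u ^ 2 ∂μ) := by gcongr; exact integral_le_sqrt_integral_sq hg

end

/-- Lipschitz continuity of the Dirichlet-energy graphon functional in the signal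
argument with respect to the L² norm: if `|W| ≤ C`, `‖X‖ ≤ M` and `‖X'‖ ≤ M`, then
`|Φ(W,X) − Φ(W,X')| ≤ 8 C M ‖X − X'‖_{L²([0,1])}`. -/
theorem graphonEnergy_signal_L2_lipschitz
    (f : ℕ) (W : ℝ → ℝ → ℝ) (C M : ℝ)
    (hWmeas : Measurable fun p : ℝ × ℝ => W p.1 p.2)
    (hWbd : ∀ u v, |W u v| ≤ C)
    (X X' : ℝ → EuclideanSpace ℝ (Fin f))
    (hXmeas : Measurable X) (hX'meas : Measurable X')
    (hXbd : ∀ u ∈ Set.Icc (0:ℝ) 1, ‖X u‖ ≤ M)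
    (hX'bd : ∀ u ∈ Set.Icc (0:ℝ) 1, ‖X' u‖ ≤ M) :
    |graphonEnergy f W X - graphonEnergy f W X'|
      ≤ 8 * C * M * Real.sqrt (∫ u in Set.Icc (0:ℝ) 1, ‖X u - X' u‖ ^ 2) := by
  have : IsProbabilityMeasure (volume.restrict (Set.Icc (0:ℝ) 1)) := ⟨by simp⟩
  exact abs_dirichletEnergy_sub_le hWmeas.aestronglyMeasurable hWbd hXmeas.aestronglyMeasurable
    hX'meas.aestronglyMeasurable (ae_restrict_of_forall_mem measurableSet_Icc hXbd)
    (ae_restrict_of_forall_mem measurableSet_Icc hX'bd)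
end

section
/- Let ι be a finite type, (Ω, μ) a probability space, and S : Ω → Finset ι a random sample such that for all i, j ∈ ι the events {ω | i ∈ S ω} and {ω | i ∈ S ω ∧ j ∈ S ω} are measurable. Let π i := μ({ω | i ∈ S ω}), π₂ i j := μ({ω | i ∈ S ω ∧ j ∈ S ω}), and let V : ι → ℝ. If π₂ i j > 0 for all i, j ∈ ι (which implies π i > 0 for all i), then the Horvitz–Thompson variance estimator is unbiased for the variance of the Horvitz–Thompson estimator: ∫_Ω (Σ_{i ∈ S ω} Σ_{j ∈ S ω} V i · V j · (1/(π i · π j) − 1/(π₂ i j))) dμ(ω) = Σ_{i ∈ ι} Σ_{j ∈ ι} V i · V j · (π₂ i j − π i · π j) / (π i · π j). -/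
/-!
Expand the estimator as `∑ i, ∑ j, 1{i, j ∈ S} · w i j` over the whole population: by linearity
of the integral its expectation is `∑ i, ∑ j, π₂ i j · w i j`, and with the Horvitz–Thompson
weights `w i j = V i V j (1 / (π i π j) - 1 / π₂ i j)` the factor `π₂ i j` turns each term into
`V i V j (π₂ i j - π i π j) / (π i π j)`.
-/

open MeasureTheory

section RandomFinset

variable {ι Ω E : Type*} [Fintype ι] [MeasurableSpace Ω] {μ : Measure Ω}
  [NormedAddCommGroup E] [NormedSpace ℝ E] [CompleteSpace E]

theorem integral_sum_mem_randomFinset [IsFiniteMeasure μ] (S : Ω → Finset ι)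
    (hS : ∀ i, MeasurableSet {ω | i ∈ S ω}) (g : ι → E) :
    ∫ ω, ∑ i ∈ S ω, g i ∂μ = ∑ i, μ.real {ω | i ∈ S ω} • g i := by
  classical
  have h_indicator (ω : Ω) :
      ∑ i ∈ S ω, g i = ∑ i, {ω' | i ∈ S ω'}.indicator (fun _ => g i) ω := by
    simp only [Set.indicator_apply, Set.mem_ofPred_eq, Finset.sum_ite_mem, Finset.univ_inter]
  simp_rw [h_indicator]
  rw [integral_finsetSum _ fun i _ => (integrable_const (g i)).indicator (hS i)]
  exact Finset.sum_congr rfl fun i _ => integral_indicator_const _ (hS i)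

theorem integral_sum_mem_sum_mem_randomFinset [IsFiniteMeasure μ] (S : Ω → Finset ι)
    (hS : ∀ i j, MeasurableSet {ω | i ∈ S ω ∧ j ∈ S ω}) (g : ι → ι → E) :
    ∫ ω, ∑ i ∈ S ω, ∑ j ∈ S ω, g i j ∂μ
      = ∑ i, ∑ j, μ.real {ω | i ∈ S ω ∧ j ∈ S ω} • g i j := by
  have := integral_sum_mem_randomFinset (μ := μ) (fun ω => S ω ×ˢ S ω)
    (by simpa only [Finset.mem_product, Prod.forall] using hS) (fun p => g p.1 p.2)
  simpa only [Finset.sum_product, Finset.mem_product, Fintype.sum_prod_type] using this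

end RandomFinset

theorem horvitzThompson_variance_estimator_unbiased_general
    {ι : Type*} [Fintype ι] {Ω : Type*} [MeasurableSpace Ω]
    (μ : Measure Ω) [IsProbabilityMeasure μ]
    (S : Ω → Finset ι)
    (hS2 : ∀ i j : ι, MeasurableSet {ω | i ∈ S ω ∧ j ∈ S ω})
    (V : ι → ℝ)
    (hπ₂ : ∀ i j : ι, 0 < (μ {ω | i ∈ S ω ∧ j ∈ S ω}).toReal) :
    ∫ ω, (∑ i ∈ S ω, ∑ j ∈ S ω,
          V i * V j *
            (1 / ((μ {ω' | i ∈ S ω'}).toReal * (μ {ω' | j ∈ S ω'}).toReal)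
              - 1 / (μ {ω' | i ∈ S ω' ∧ j ∈ S ω'}).toReal)) ∂μ
      = ∑ i : ι, ∑ j : ι,
          V i * V j *
            ((μ {ω' | i ∈ S ω' ∧ j ∈ S ω'}).toReal
              - (μ {ω' | i ∈ S ω'}).toReal * (μ {ω' | j ∈ S ω'}).toReal) /
            ((μ {ω' | i ∈ S ω'}).toReal * (μ {ω' | j ∈ S ω'}).toReal) := by
  have hπ (i : ι) : 0 < (μ {ω | i ∈ S ω}).toReal := by simpa only [and_self] using hπ₂ i i
  rw [integral_sum_mem_sum_mem_randomFinset S hS2]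
  refine Finset.sum_congr rfl fun i _ => Finset.sum_congr rfl fun j _ => ?_
  have hij := (hπ₂ i j).ne'
  have hi := (hπ i).ne'
  have hj := (hπ j).ne'
  simp only [Measure.real, smul_eq_mul]
  field_simp

/-- Unbiasedness of the Horvitz–Thompson variance estimator: with inclusion
probabilities `π i = μ {ω | i ∈ S ω}` and joint inclusion probabilities
`π₂ i j = μ {ω | i ∈ S ω ∧ j ∈ S ω}`, all positive `π₂ i j`, the expectation of
`Σ_{i ∈ S ω} Σ_{j ∈ S ω} V i V j (1/(π i π j) − 1/π₂ i j)` equals the variance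
`Σᵢ Σⱼ V i V j (π₂ i j − π i π j) / (π i π j)` of the Horvitz–Thompson estimator. -/
theorem horvitzThompson_variance_estimator_unbiased
    {ι : Type*} [Fintype ι] {Ω : Type*} [MeasurableSpace Ω]
    (μ : Measure Ω) [IsProbabilityMeasure μ]
    (S : Ω → Finset ι)
    (hS : ∀ i : ι, MeasurableSet {ω | i ∈ S ω})
    (hS2 : ∀ i j : ι, MeasurableSet {ω | i ∈ S ω ∧ j ∈ S ω})
    (V : ι → ℝ)
    (hπ₂ : ∀ i j : ι, 0 < (μ {ω | i ∈ S ω ∧ j ∈ S ω}).toReal) :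
    ∫ ω, (∑ i ∈ S ω, ∑ j ∈ S ω,
          V i * V j *
            (1 / ((μ {ω' | i ∈ S ω'}).toReal * (μ {ω' | j ∈ S ω'}).toReal)
              - 1 / (μ {ω' | i ∈ S ω' ∧ j ∈ S ω'}).toReal)) ∂μ
      = ∑ i : ι, ∑ j : ι,
          V i * V j *
            ((μ {ω' | i ∈ S ω' ∧ j ∈ S ω'}).toReal
              - (μ {ω' | i ∈ S ω'}).toReal * (μ {ω' | j ∈ S ω'}).toReal) /
            ((μ {ω' | i ∈ S ω'}).toReal * (μ {ω' | j ∈ S ω'}).toReal) :=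
  horvitzThompson_variance_estimator_unbiased_general μ S hS2 V hπ₂
end
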